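/- arXiv:2007.15289 — 3 statements merged into one kernel-verified Lean document; each statement's English description precedes it below -/
import Mathlib

section
/- Let R be a DVR with involution and uniformizer τ with τ = τ-bar, A a finitely generated R-torsion module, λ a sesquilinear Hermitian nonsingular pairing on A valued in Q(R)/R, and a ∈ A with ν(a) = ν(λ(a,a)), where ν(x) denotes the minimal k ≥ 0 with τᵏ x = 0. Then (A, λ) is isometric to the orthogonal sum of the cyclic submodule ⟨a⟩ and ⟨a⟩^⊥. -/
/-- `Q(R)/R`: the total quotient ring of `R` modulo (the image of) `R`, as an `R`-module. -/
abbrev QR (R : Type) [CommRing R] : Type :=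
  FractionRing R ⧸ LinearMap.range (Algebra.linearMap R (FractionRing R))

/-- A conjugation on `Q(R)/R` compatible with an involution `σ` of `R`. -/
structure ConjData (R : Type) [CommRing R] (σ : R →+* R) where
  conj : QR R →+ QR R
  conj_conj : ∀ x, conj (conj x) = x
  conj_smul : ∀ (r : R) (x : QR R), conj (r • x) = σ r • conj x

/-- A sesquilinear Hermitian pairing on `A` with values in `Q(R)/R`:
linear in the first variable, conjugate-linear (via `σ`) in the second. -/
structure SesqPairing (R : Type) [CommRing R] (σ : R →+* R) (c : ConjData R σ)
    (A : Type) [AddCommGroup A] [Module R A] where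
  pair : A → A → QR R
  add_left : ∀ a b x, pair (a + b) x = pair a x + pair b x
  add_right : ∀ x a b, pair x (a + b) = pair x a + pair x b
  smul_left : ∀ (r : R) (a x : A), pair (r • a) x = r • pair a x
  smul_right : ∀ (r : R) (x a : A), pair x (r • a) = σ r • pair x a
  herm : ∀ a b, pair a b = c.conj (pair b a)

namespace SesqPairing

variable {R : Type} [CommRing R] {σ : R →+* R} {c : ConjData R σ}
  {A : Type} [AddCommGroup A] [Module R A]

lemma zero_left (P : SesqPairing R σ c A) (x : A) : P.pair 0 x = 0 := by
  have h := P.add_left 0 0 x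
  rw [add_zero] at h
  exact (left_eq_add.mp h)

/-- Orthogonal complement `M^⊥ = {a : λ(a,m) = 0 for all m ∈ M}`. -/
def perp (P : SesqPairing R σ c A) (M : Submodule R A) : Submodule R A where
  carrier := {a | ∀ m ∈ M, P.pair a m = 0}
  zero_mem' := fun m hm => P.zero_left m
  add_mem' := by
    intro a b ha hb m hm
    rw [P.add_left, ha m hm, hb m hm, add_zero]
  smul_mem' := by
    intro r a ha m hm
    rw [P.smul_left, ha m hm, smul_zero]

lemma mem_perp_iff (P : SesqPairing R σ c A) (M : Submodule R A) (a : A) :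
    a ∈ P.perp M ↔ ∀ m ∈ M, P.pair a m = 0 := Iff.rfl

/-- Nonsingularity: the adjoint `a ↦ λ(a, -)`, viewed as a map into the conjugated
dual (i.e. `σ`-semilinear functionals), is bijective. -/
def Nonsingular (P : SesqPairing R σ c A) : Prop :=
  (∀ a : A, (∀ b, P.pair a b = 0) → a = 0) ∧
  (∀ f : A →ₛₗ[σ] QR R, ∃ a, ∀ b, f b = P.pair a b)

end SesqPairing

/-- `ν x`: the minimal `k ≥ 0` with `τ ^ k • x = 0`. -/
noncomputable def nuOf {R M : Type} [CommRing R] [AddCommGroup M] [Module R M]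
    (τ : R) (x : M) : ℕ :=
  sInf {k : ℕ | τ ^ k • x = 0}


section Aux

variable {R : Type} [CommRing R] [IsDomain R] [IsDiscreteValuationRing R]

local notation "φ" => algebraMap R (FractionRing R)

lemma QR.mk_eq_zero_iff (y : FractionRing R) :
    (Submodule.Quotient.mk y : QR R) = 0 ↔ ∃ s : R, φ s = y := by
  rw [Submodule.Quotient.mk_eq_zero]
  simp [LinearMap.mem_range, Algebra.linearMap_apply]

lemma QR.unit_of_not_dvd {τ t : R} (hτ : Irreducible τ) (h : ¬ τ ∣ t) : IsUnit t := by
  have ht : t ≠ 0 := fun h0 => h (h0 ▸ dvd_zero τ)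
  obtain ⟨m, u, rfl⟩ := IsDiscreteValuationRing.eq_unit_mul_pow_irreducible ht hτ
  rcases Nat.eq_zero_or_pos m with rfl | hm
  · simpa using u.isUnit
  · exact absurd (dvd_mul_of_dvd_right (dvd_pow_self τ (Nat.pos_iff_ne_zero.mp hm)) ↑u) h

/-- Structure lemma: representative data for an element of `QR R` of order dividing `τ^n`
with exact order `τ^n`. -/
lemma QR.exists_rep {τ : R} (hτ : Irreducible τ) {n : ℕ} (hn : 0 < n) {p : QR R}
    (hp : τ ^ n • p = 0) (hmin : τ ^ (n - 1) • p ≠ 0) :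
    ∃ (p' : FractionRing R) (u : Rˣ), Submodule.Quotient.mk p' = p ∧
      φ (τ ^ n) * p' = φ ↑u := by
  obtain ⟨p', rfl⟩ := Submodule.Quotient.mk_surjective _ p
  rw [← Submodule.Quotient.mk_smul, QR.mk_eq_zero_iff] at hp
  obtain ⟨t, ht⟩ := hp
  rw [Algebra.smul_def] at ht
  have hτ0 : φ τ ≠ 0 := fun h0 =>
    hτ.ne_zero (IsFractionRing.injective R (FractionRing R) (by simpa using h0))
  have htd : ¬ τ ∣ t := by
    rintro ⟨t', rfl⟩
    apply hmin
    rw [← Submodule.Quotient.mk_smul, QR.mk_eq_zero_iff]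
    refine ⟨t', ?_⟩
    rw [Algebra.smul_def]
    apply mul_left_cancel₀ hτ0
    calc φ τ * φ t' = φ (τ * t') := (map_mul _ _ _).symm
    _ = φ (τ ^ n) * p' := ht
    _ = φ τ * (φ (τ ^ (n-1)) * p') := by
        rw [← mul_assoc, ← map_mul, ← pow_succ', Nat.sub_add_cancel hn]
  obtain ⟨u, hu⟩ := QR.unit_of_not_dvd hτ htd
  exact ⟨p', u, rfl, by rw [← ht, hu]⟩

lemma QR.exists_smul_eq {τ : R} (hτ : Irreducible τ) {n : ℕ} {p : QR R}
    (hp : τ ^ n • p = 0) (hmin : ∀ k < n, τ ^ k • p ≠ 0) {q : QR R}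
    (hq : τ ^ n • q = 0) : ∃ r : R, q = r • p := by
  rcases Nat.eq_zero_or_pos n with rfl | hn
  · refine ⟨0, ?_⟩
    rw [zero_smul]
    simpa using hq
  obtain ⟨p', u, rfl, hpu⟩ := QR.exists_rep hτ hn hp (hmin _ (Nat.sub_lt hn one_pos))
  obtain ⟨q', rfl⟩ := Submodule.Quotient.mk_surjective _ q
  rw [← Submodule.Quotient.mk_smul, QR.mk_eq_zero_iff] at hq
  obtain ⟨s, hs⟩ := hq
  rw [Algebra.smul_def] at hs
  have hτn0 : φ (τ ^ n) ≠ 0 := fun h0 =>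
    pow_ne_zero n hτ.ne_zero (IsFractionRing.injective R (FractionRing R) (by simpa using h0))
  refine ⟨s * ↑u⁻¹, ?_⟩
  rw [← Submodule.Quotient.mk_smul]
  congr 1
  rw [Algebra.smul_def]
  apply mul_left_cancel₀ hτn0
  rw [← hs, ← mul_assoc, mul_comm (φ (τ ^ n)) (φ (s * ↑u⁻¹)), mul_assoc, hpu,
    ← map_mul, mul_assoc]
  rw [Units.inv_mul, mul_one]

lemma QR.pow_dvd_of_smul_eq_zero {τ : R} (hτ : Irreducible τ) {n : ℕ} {p : QR R}
    (hp : τ ^ n • p = 0) (hmin : ∀ k < n, τ ^ k • p ≠ 0) {r : R}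
    (hr : r • p = 0) : τ ^ n ∣ r := by
  rcases Nat.eq_zero_or_pos n with rfl | hn
  · simpa using one_dvd r
  obtain ⟨p', u, rfl, hpu⟩ := QR.exists_rep hτ hn hp (hmin _ (Nat.sub_lt hn one_pos))
  rw [← Submodule.Quotient.mk_smul, QR.mk_eq_zero_iff] at hr
  obtain ⟨w, hw⟩ := hr
  rw [Algebra.smul_def] at hw
  have key : φ (w * τ ^ n) = φ (r * ↑u) := by
    rw [map_mul, map_mul, hw, mul_assoc, mul_comm p', hpu]
  have key2 : w * τ ^ n = r * ↑u := IsFractionRing.injective R (FractionRing R) key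
  refine ⟨w * ↑u⁻¹, ?_⟩
  have : r * ↑u * ↑u⁻¹ = r := by rw [mul_assoc, Units.mul_inv, mul_one]
  rw [← this, ← key2]; ring

end Aux

section PairAux

variable {R : Type} [CommRing R] {σ : R →+* R} {c : ConjData R σ}
  {A : Type} [AddCommGroup A] [Module R A]

lemma SesqPairing.zero_right' (P : SesqPairing R σ c A) (x : A) : P.pair x 0 = 0 := by
  have h := P.add_right x 0 0
  rw [add_zero] at h
  exact (left_eq_add.mp h)

lemma SesqPairing.neg_left' (P : SesqPairing R σ c A) (a x : A) :
    P.pair (-a) x = - P.pair a x := by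
  have h := P.add_left a (-a) x
  rw [add_neg_cancel, P.zero_left] at h
  exact (eq_neg_of_add_eq_zero_right h.symm)

lemma SesqPairing.sub_left' (P : SesqPairing R σ c A) (a b x : A) :
    P.pair (a - b) x = P.pair a x - P.pair b x := by
  rw [sub_eq_add_neg, P.add_left, P.neg_left', sub_eq_add_neg]

end PairAux

/-- Over a DVR with involution and self-conjugate uniformizer `τ`, if
`a ∈ A` satisfies `ν(a) = ν(λ(a,a))` then `(A, λ)` is isometric, via the sum of the
inclusions, to the orthogonal sum of the cyclic submodule `⟨a⟩` and `⟨a⟩^⊥`. -/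
theorem stmt6 {R : Type} [CommRing R] [IsDomain R] [IsDiscreteValuationRing R]
    (σ : R →+* R) (hσ : Function.Involutive σ)
    (τ : R) (hτ : Irreducible τ) (hτσ : σ τ = τ)
    (c : ConjData R σ)
    {A : Type} [AddCommGroup A] [Module R A] [Module.Finite R A]
    (hA : Module.IsTorsion R A)
    (P : SesqPairing R σ c A) (hP : P.Nonsingular)
    (a : A) (ha : nuOf τ a = nuOf τ (P.pair a a)) :
    Function.Bijective
      (fun p : (Submodule.span R {a} : Submodule R A) × (P.perp (Submodule.span R {a})) =>
        (p.1 : A) + (p.2 : A)) ∧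
    ∀ (b b' : Submodule.span R {a}) (x x' : P.perp (Submodule.span R {a})),
      P.pair ((b : A) + (x : A)) ((b' : A) + (x' : A)) =
        P.pair (b : A) (b' : A) + P.pair (x : A) (x' : A) := by
  -- notation
  set N := nuOf τ (P.pair a a) with hN
  -- a is τ-power torsion
  have hane : ∃ k : ℕ, τ ^ k • a = 0 := by
    obtain ⟨r₀, hr₀⟩ := @hA a
    have hr₀0 : (r₀ : R) ≠ 0 := nonZeroDivisors.coe_ne_zero r₀
    obtain ⟨k, u, hu⟩ := IsDiscreteValuationRing.eq_unit_mul_pow_irreducible hr₀0 hτ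
    refine ⟨k, ?_⟩
    have hr₀' : (r₀ : R) • a = 0 := hr₀
    have : (↑u⁻¹ : R) • ((r₀ : R) • a) = 0 := by rw [hr₀']; simp
    rwa [← mul_smul, hu, ← mul_assoc, Units.inv_mul, one_mul] at this
  have h1 : τ ^ (nuOf τ a) • a = 0 := Nat.sInf_mem hane
  have hNa : τ ^ N • a = 0 := by rw [← ha]; exact h1
  have hp0 : τ ^ N • P.pair a a = 0 := by
    rw [← P.smul_left, hNa, P.zero_left]
  have hmin : ∀ k < N, τ ^ k • P.pair a a ≠ 0 := fun k hk h => Nat.notMem_of_lt_sInf hk h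
  have hστn : ∀ m : ℕ, σ (τ ^ m) = τ ^ m := fun m => by rw [map_pow, hτσ]
  -- key fact: any element of span {a} paired with itself...
  constructor
  · constructor
    · -- injectivity
      rintro ⟨b₁, x₁⟩ ⟨b₂, x₂⟩ h
      simp only at h
      -- the difference
      have hd : ((b₁ - b₂ : Submodule.span R {a}) : A) + ((x₁ - x₂ : P.perp _) : A) = 0 := by
        push_cast
        rw [sub_add_sub_comm, h, sub_self]
      obtain ⟨r, hr⟩ := Submodule.mem_span_singleton.mp (b₁ - b₂).2
      have hpa : P.pair ((b₁ - b₂ : Submodule.span R {a}) : A) a = 0 := by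
        have hx : P.pair ((x₁ - x₂ : P.perp (Submodule.span R {a})) : A) a = 0 :=
          (x₁ - x₂).2 a (Submodule.mem_span_singleton_self a)
        have := P.add_left ((b₁ - b₂ : Submodule.span R {a}) : A)
          ((x₁ - x₂ : P.perp (Submodule.span R {a})) : A) a
        rw [hd, P.zero_left, hx, add_zero] at this
        exact this.symm
      rw [← hr, P.smul_left] at hpa
      obtain ⟨w, hw⟩ := QR.pow_dvd_of_smul_eq_zero hτ hp0 hmin hpa
      have hb : ((b₁ - b₂ : Submodule.span R {a}) : A) = 0 := by
        rw [← hr, hw, mul_comm, mul_smul, hNa, smul_zero]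
      have hb' : b₁ = b₂ := by
        apply Subtype.ext
        have := sub_eq_zero.mp (by exact_mod_cast hb : (b₁ : A) - (b₂ : A) = 0)
        exact this
      have hx' : x₁ = x₂ := by
        apply Subtype.ext
        have hx0 : ((x₁ - x₂ : P.perp (Submodule.span R {a})) : A) = 0 := by
          have := hd
          rw [hb] at this
          simpa using this
        have := sub_eq_zero.mp (by exact_mod_cast hx0 : (x₁ : A) - (x₂ : A) = 0)
        exact this
      rw [hb', hx']
    · -- surjectivity
      intro y
      have hy : τ ^ N • P.pair y a = 0 := by
        have h0 : P.pair y (τ ^ N • a) = 0 := by rw [hNa, P.zero_right']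
        rwa [P.smul_right, hστn] at h0
      obtain ⟨r, hr⟩ := QR.exists_smul_eq hτ hp0 hmin hy
      have hmem : r • a ∈ Submodule.span R {a} :=
        Submodule.smul_mem _ r (Submodule.mem_span_singleton_self a)
      have hxa : P.pair (y - r • a) a = 0 := by
        rw [P.sub_left', P.smul_left, ← hr, sub_self]
      have hperp : (y - r • a) ∈ P.perp (Submodule.span R {a}) := by
        intro m hm
        obtain ⟨r', rfl⟩ := Submodule.mem_span_singleton.mp hm
        rw [P.smul_right, hxa, smul_zero]
      exact ⟨⟨⟨r • a, hmem⟩, ⟨y - r • a, hperp⟩⟩, by simp⟩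
  · -- orthogonality
    intro b b' x x'
    have hxb : P.pair (x : A) (b' : A) = 0 := x.2 b' b'.2
    have hbx : P.pair (b : A) (x' : A) = 0 := by
      rw [P.herm, x'.2 b b.2, map_zero]
    rw [P.add_left, P.add_right, P.add_right, hxb, hbx, add_zero, zero_add]
end

section
/- Let R be a DVR with involution and uniformizer τ with τ = τ-bar, A a nonzero finitely generated R-torsion module, and λ a sesquilinear Hermitian nonsingular pairing on A. For every a ∈ A there exists b ∈ A with ν(λ(a,b)) = ν(a), where ν(x) is the minimal k ≥ 0 with τᵏ x = 0. -/
/-- Over a DVR with involution and self-conjugate uniformizer `τ`,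
for a nonsingular sesquilinear Hermitian pairing `λ` on a nonzero finitely generated
torsion module `A`: for every `a ∈ A` there is `b ∈ A` with `ν(λ(a,b)) = ν(a)`. -/
theorem stmt7 {R : Type} [CommRing R] [IsDomain R] [IsDiscreteValuationRing R]
    (σ : R →+* R) (hσ : Function.Involutive σ)
    (τ : R) (hτ : Irreducible τ) (hτσ : σ τ = τ)
    (c : ConjData R σ)
    {A : Type} [AddCommGroup A] [Module R A] [Module.Finite R A] [Nontrivial A]
    (hA : Module.IsTorsion R A)
    (P : SesqPairing R σ c A) (hP : P.Nonsingular) :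
    ∀ a : A, ∃ b : A, nuOf τ (P.pair a b) = nuOf τ a := by
  -- helper: upward closure of annihilation
  have up : ∀ {M : Type} [AddCommGroup M] [Module R M] (x : M) (k k' : ℕ),
      τ ^ k • x = 0 → k ≤ k' → τ ^ k' • x = 0 := by
    intro M _ _ x k k' h hle
    have : τ ^ k' • x = τ ^ (k' - k) • (τ ^ k • x) := by
      rw [smul_smul, ← pow_add, Nat.sub_add_cancel hle]
    rw [this, h, smul_zero]
  intro a
  -- the set defining ν(a) is nonempty
  obtain ⟨r, hr⟩ := @hA a
  obtain ⟨m, u, hu⟩ := IsDiscreteValuationRing.eq_unit_mul_pow_irreducible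
    (nonZeroDivisors.coe_ne_zero r) hτ
  have hmem : τ ^ m • a = 0 := by
    have : (u : R) • (τ ^ m • a) = 0 := by
      rw [smul_smul, ← hu]; exact hr
    have := congrArg (fun z => ((u⁻¹ : Rˣ) : R) • z) this
    simpa [smul_smul] using this
  have hSne : (Set.Nonempty {k : ℕ | τ ^ k • a = 0}) := ⟨m, hmem⟩
  set n := nuOf τ a with hn
  have hna : τ ^ n • a = 0 := Nat.sInf_mem hSne
  rcases Nat.eq_zero_or_pos n with h0 | hpos
  · refine ⟨0, ?_⟩
    have ha0 : a = 0 := by simpa [h0] using hna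
    have : P.pair a 0 = 0 := by rw [ha0]; exact P.zero_left 0
    rw [this, h0]
    have : (0 : ℕ) ∈ {k : ℕ | τ ^ k • (0 : QR R) = 0} := by simp
    exact Nat.le_antisymm (Nat.sInf_le this) (Nat.zero_le _)
  · -- n ≥ 1; use nondegeneracy at τ^(n-1) • a
    have hpred : τ ^ (n - 1) • a ≠ 0 := by
      intro h
      have : n ≤ n - 1 := Nat.sInf_le h
      omega
    have : ¬ ∀ b, P.pair (τ ^ (n-1) • a) b = 0 := fun h => hpred (hP.1 _ h)
    push_neg at this
    obtain ⟨b, hb⟩ := this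
    refine ⟨b, ?_⟩
    rw [P.smul_left] at hb
    have hTn : τ ^ n • P.pair a b = 0 := by
      rw [← P.smul_left, hna, P.zero_left]
    have hTne : (Set.Nonempty {k : ℕ | τ ^ k • P.pair a b = 0}) := ⟨n, hTn⟩
    refine Nat.le_antisymm (Nat.sInf_le hTn) ?_
    by_contra h
    push_neg at h
    have hle : nuOf τ (P.pair a b) ≤ n - 1 := by
      unfold nuOf at h ⊢; omega
    exact hb (up _ _ _ (Nat.sInf_mem hTne) hle)
end

section
/- Let R be a DVR with involution, self-conjugate uniformizer τ, and a unit s with s + s-bar = 1. Let A be a finitely generated R-torsion module with a sesquilinear Hermitian nonsingular pairing λ. Suppose a ∈ A satisfies ν(λ(a,b)) < ν(a) for all b ∈ A with ν(b) = ν(a). Then there exists c ∈ A with ν(c) > ν(a) such that ν(a + τc) < ν(a). -/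
section Aux

lemma nuOf_le {R M : Type} [CommRing R] [AddCommGroup M] [Module R M]
    {τ : R} {x : M} {k : ℕ} (h : τ ^ k • x = 0) : nuOf τ x ≤ k :=
  Nat.sInf_le h

lemma smul_nuOf_eq_zero {R M : Type} [CommRing R] [AddCommGroup M] [Module R M]
    {τ : R} {x : M} (hne : ∃ m, τ ^ m • x = 0) : τ ^ (nuOf τ x) • x = 0 :=
  Nat.sInf_mem hne

lemma smul_eq_zero_of_nuOf_le {R M : Type} [CommRing R] [AddCommGroup M] [Module R M]
    {τ : R} {x : M} {k : ℕ} (hne : ∃ m, τ ^ m • x = 0)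
    (h : nuOf τ x ≤ k) : τ ^ k • x = 0 := by
  have hmem : τ ^ (nuOf τ x) • x = 0 := Nat.sInf_mem hne
  calc τ ^ k • x = τ ^ (k - nuOf τ x) • τ ^ (nuOf τ x) • x := by
        rw [smul_smul, ← pow_add]
        congr 2
        omega
  _ = 0 := by rw [hmem, smul_zero]

lemma QR_exists_smul_eq {R : Type} [CommRing R] [IsDomain R] {r : R} (hr : r ≠ 0) (w : QR R) :
    ∃ u : QR R, r • u = w := by
  obtain ⟨q, rfl⟩ := Submodule.Quotient.mk_surjective _ w
  refine ⟨Submodule.Quotient.mk ((algebraMap R (FractionRing R) r)⁻¹ * q), ?_⟩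
  rw [← Submodule.Quotient.mk_smul]
  congr 1
  have h0 : algebraMap R (FractionRing R) r ≠ 0 :=
    (map_ne_zero_iff _ (IsFractionRing.injective R (FractionRing R))).mpr hr
  rw [Algebra.smul_def, ← mul_assoc, mul_inv_cancel₀ h0, one_mul]

lemma baer_QR (R : Type) [CommRing R] [IsDomain R] [IsPrincipalIdealRing R] :
    Module.Baer R (QR R) := by
  intro I g
  obtain ⟨r, rfl⟩ := (IsPrincipalIdealRing.principal I).principal
  by_cases hr : r = 0
  · subst hr
    refine ⟨0, fun x mem => ?_⟩
    obtain ⟨t, ht⟩ := Submodule.mem_span_singleton.mp mem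
    have hx0 : x = 0 := by rw [← ht, smul_zero]
    have : (⟨x, mem⟩ : (Submodule.span R {(0 : R)} : Submodule R R)) = 0 :=
      (Submodule.mk_eq_zero _ mem).mpr hx0
    rw [this, map_zero, LinearMap.zero_apply]
  · have hrmem : r ∈ Submodule.span R {r} := Submodule.mem_span_singleton_self r
    obtain ⟨u, hu⟩ := QR_exists_smul_eq hr (g ⟨r, hrmem⟩)
    refine ⟨LinearMap.toSpanSingleton R _ u, fun x mem => ?_⟩
    obtain ⟨t, ht⟩ := Submodule.mem_span_singleton.mp mem
    have hx : (⟨x, mem⟩ : (Submodule.span R {r} : Submodule R R)) = t • ⟨r, hrmem⟩ :=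
      Subtype.ext (by simpa using ht.symm)
    rw [hx, map_smul, ← hu, LinearMap.toSpanSingleton_apply, smul_smul, ← ht, smul_eq_mul]

end Aux

/-- Over a DVR with involution, self-conjugate uniformizer `τ` and unit
`s` with `s + s-bar = 1`: if `a ∈ A` satisfies `ν(λ(a,b)) < ν(a)` for all `b` with
`ν(b) = ν(a)`, then there is `c' ∈ A` with `ν(c') > ν(a)` and `ν(a + τ·c') < ν(a)`. -/
theorem stmt10 {R : Type} [CommRing R] [IsDomain R] [IsDiscreteValuationRing R]
    (σ : R →+* R) (hσ : Function.Involutive σ)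
    (τ : R) (hτ : Irreducible τ) (hτσ : σ τ = τ)
    (s : Rˣ) (hs : (s : R) + σ s = 1)
    (c : ConjData R σ)
    {A : Type} [AddCommGroup A] [Module R A] [Module.Finite R A]
    (hA : Module.IsTorsion R A)
    (P : SesqPairing R σ c A) (hP : P.Nonsingular)
    (a : A) (ha : ∀ b : A, nuOf τ b = nuOf τ a → nuOf τ (P.pair a b) < nuOf τ a) :
    ∃ c' : A, nuOf τ a < nuOf τ c' ∧ nuOf τ (a + τ • c') < nuOf τ a := by
  classical
  set n := nuOf τ a with hn
  -- every element of A is τ-power torsion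
  have htorA : ∀ x : A, ∃ k, τ ^ k • x = 0 := by
    intro x
    obtain ⟨r, hr⟩ := @hA x
    have hr0 : (r : R) ≠ 0 := nonZeroDivisors.coe_ne_zero r
    obtain ⟨k, u, hu⟩ := IsDiscreteValuationRing.eq_unit_mul_pow_irreducible hr0 hτ
    refine ⟨k, ?_⟩
    have h1 : ((u : R) * τ ^ k) • x = 0 := by
      rw [← hu]
      exact hr
    have h2 : (u : R) • (τ ^ k • x) = 0 := by rwa [smul_smul]
    have := congrArg (fun y => ((u⁻¹ : Rˣ) : R) • y) h2
    simpa [smul_smul] using this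
  -- conj preliminaries
  have hconjinj : ∀ z : QR R, c.conj z = 0 → z = 0 := by
    intro z h
    rw [← c.conj_conj z, h, map_zero]
  have hconjτ : ∀ (k : ℕ) (z : QR R), c.conj (τ ^ k • z) = τ ^ k • c.conj z := by
    intro k z
    rw [c.conj_smul, map_pow, hτσ]
  have hστ : ∀ k : ℕ, σ (τ ^ k) = τ ^ k := fun k => by rw [map_pow, hτσ]
  have hpair_zero_right : ∀ y : A, P.pair y 0 = 0 := by
    intro y
    have h := P.add_right y 0 0
    rw [add_zero] at h
    exact (left_eq_add.mp h)
  -- the case n = 0 is absurd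
  rcases Nat.eq_zero_or_pos n with hn0 | hn1
  · exfalso
    have h0 : nuOf τ (0 : A) = nuOf τ a := by
      have : nuOf τ (0 : A) ≤ 0 := nuOf_le (by simp)
      omega
    have := ha 0 h0
    omega
  have hτna : τ ^ n • a = 0 := smul_eq_zero_of_nuOf_le (htorA a) le_rfl
  have hτn1a : τ ^ (n - 1) • a ≠ 0 := by
    intro h
    have := nuOf_le h
    omega
  -- key step : τ^(n-1) • a ∈ τ^n • A
  have hmem : ∃ cc : A, τ ^ (n - 1) • a = τ ^ n • cc := by
    by_contra hx
    -- set up the quotient A / τ^n A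
    set N : Submodule R A := LinearMap.range (LinearMap.lsmul R A (τ ^ n)) with hN
    set x : A := τ ^ (n - 1) • a with hxdef
    set xb : A ⧸ N := N.mkQ x with hxb
    have hτxb : τ • xb = 0 := by
      rw [hxb, ← map_smul]
      have : τ • x = 0 := by
        rw [hxdef, smul_smul, ← pow_succ']
        have : n - 1 + 1 = n := by omega
        rw [this, hτna]
      rw [this, map_zero]
    have hann : ∀ r : R, r • xb = 0 → τ ∣ r := by
      intro r h
      by_contra hdvd
      have hr0 : r ≠ 0 := by
        intro h0
        exact hdvd (h0 ▸ dvd_zero τ)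
      obtain ⟨k, u, hu⟩ := IsDiscreteValuationRing.eq_unit_mul_pow_irreducible hr0 hτ
      have hk0 : k = 0 := by
        by_contra hk
        apply hdvd
        refine ⟨(u : R) * τ ^ (k - 1), ?_⟩
        rw [hu]
        rw [mul_comm τ _, mul_assoc, ← pow_succ]
        congr 2
        omega
      subst hk0
      rw [pow_zero, mul_one] at hu
      -- r is a unit, and r • x ∈ N, so x ∈ N
      have hrx : r • x ∈ N := by
        rw [hxb, ← map_smul] at h
        exact (Submodule.Quotient.mk_eq_zero N).mp h
      obtain ⟨z, hz⟩ := hrx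
      have hz' : τ ^ n • z = r • x := by simpa using hz
      apply hx
      refine ⟨((u⁻¹ : Rˣ) : R) • z, ?_⟩
      have h5 : τ ^ n • (((u⁻¹ : Rˣ) : R) • z) = x := by
        rw [smul_comm, hz', smul_smul, hu, Units.inv_mul, one_smul]
      exact h5.symm
    -- the element [1/τ] of QR R
    have hιτ : algebraMap R (FractionRing R) τ ≠ 0 :=
      (map_ne_zero_iff _ (IsFractionRing.injective R (FractionRing R))).mpr hτ.ne_zero
    set z₀ : QR R := Submodule.Quotient.mk ((algebraMap R (FractionRing R) τ)⁻¹) with hz₀def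
    have hτz₀ : τ • z₀ = 0 := by
      rw [hz₀def, ← Submodule.Quotient.mk_smul, Submodule.Quotient.mk_eq_zero]
      refine ⟨1, ?_⟩
      simp [Algebra.smul_def, mul_inv_cancel₀ hιτ]
    have hz₀ : z₀ ≠ 0 := by
      intro h
      rw [hz₀def, Submodule.Quotient.mk_eq_zero] at h
      obtain ⟨r, hr⟩ := h
      have h1 : algebraMap R (FractionRing R) (r * τ) = 1 := by
        rw [map_mul]
        simp only [Algebra.linearMap_apply] at hr
        rw [hr, inv_mul_cancel₀ hιτ]
      have h2 : r * τ = 1 := by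
        apply IsFractionRing.injective R (FractionRing R)
        rw [h1, map_one]
      exact hτ.not_isUnit (IsUnit.of_mul_eq_one (a := τ) r (by rw [mul_comm]; exact h2))
    -- the maps φ : R/(τ) → A/N and ψ : R/(τ) → QR R
    have hkerφ : Ideal.span {τ} ≤ LinearMap.ker (LinearMap.toSpanSingleton R (A ⧸ N) xb) := by
      rw [Ideal.span_le]
      intro y hy
      rw [Set.mem_singleton_iff] at hy
      subst hy
      simp only [SetLike.mem_coe, LinearMap.mem_ker, LinearMap.toSpanSingleton_apply]
      exact hτxb
    have hkerψ : Ideal.span {τ} ≤ LinearMap.ker (LinearMap.toSpanSingleton R (QR R) z₀) := by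
      rw [Ideal.span_le]
      intro y hy
      rw [Set.mem_singleton_iff] at hy
      subst hy
      simp only [SetLike.mem_coe, LinearMap.mem_ker, LinearMap.toSpanSingleton_apply]
      exact hτz₀
    set φ : (R ⧸ Ideal.span {τ}) →ₗ[R] (A ⧸ N) :=
      Submodule.liftQ _ (LinearMap.toSpanSingleton R (A ⧸ N) xb) hkerφ with hφdef
    set ψ : (R ⧸ Ideal.span {τ}) →ₗ[R] QR R :=
      Submodule.liftQ _ (LinearMap.toSpanSingleton R (QR R) z₀) hkerψ with hψdef
    have hφinj : Function.Injective φ := by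
      rw [← LinearMap.ker_eq_bot, Submodule.eq_bot_iff]
      intro y hy
      obtain ⟨r, rfl⟩ := Submodule.Quotient.mk_surjective _ y
      rw [LinearMap.mem_ker, hφdef, Submodule.liftQ_apply,
        LinearMap.toSpanSingleton_apply] at hy
      rw [Submodule.Quotient.mk_eq_zero, Ideal.mem_span_singleton]
      exact hann r hy
    -- extend ψ along φ using injectivity of QR R
    have hinjQR : Module.Injective R (QR R) := (baer_QR R).injective
    obtain ⟨gbar, hgbar⟩ := hinjQR.out φ hφinj ψ
    set g : A →ₗ[R] QR R := gbar.comp N.mkQ with hgdef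
    have hg1 : g x = z₀ := by
      have h1 : φ (Submodule.Quotient.mk 1) = xb := by
        rw [hφdef, Submodule.liftQ_apply, LinearMap.toSpanSingleton_apply, one_smul]
      have h2 : gbar xb = z₀ := by
        rw [← h1, hgbar, hψdef, Submodule.liftQ_apply, LinearMap.toSpanSingleton_apply,
          one_smul]
      rw [hgdef]
      exact h2
    have hg2 : ∀ y : A, g (τ ^ n • y) = 0 := by
      intro y
      have : N.mkQ (τ ^ n • y) = 0 := by
        rw [Submodule.mkQ_apply, Submodule.Quotient.mk_eq_zero]
        exact ⟨y, by simp⟩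
      rw [hgdef, LinearMap.comp_apply, this, map_zero]
    -- the semilinear functional f = conj ∘ g
    set f : A →ₛₗ[σ] QR R :=
      { toFun := fun y => c.conj (g y)
        map_add' := fun y z => by
          show c.conj (g (y + z)) = c.conj (g y) + c.conj (g z)
          rw [g.map_add, c.conj.map_add]
        map_smul' := fun r y => by
          show c.conj (g (r • y)) = σ r • c.conj (g y)
          rw [g.map_smul, c.conj_smul] } with hfdef
    have hfapp : ∀ y : A, f y = c.conj (g y) := fun y => rfl
    obtain ⟨b, hb⟩ := hP.2 f
    -- τ^n • b = 0
    have hbτ : τ ^ n • b = 0 := by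
      apply hP.1
      intro y
      rw [P.smul_left, ← hb y, hfapp, ← hconjτ]
      have : τ ^ n • g y = g (τ ^ n • y) := (map_smul g _ _).symm
      rw [this, hg2, map_zero]
    -- the pairing value
    have hpairba : P.pair b a = c.conj (g a) := by rw [← hb a, hfapp]
    have hkey : τ ^ (n - 1) • P.pair b a ≠ 0 := by
      rw [hpairba, ← hconjτ]
      intro h
      have h2 : τ ^ (n - 1) • g a = 0 := hconjinj _ h
      rw [← map_smul] at h2
      rw [hg1] at h2
      exact hz₀ h2
    have hpairab : P.pair a b = c.conj (P.pair b a) := P.herm a b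
    have hab_n1 : τ ^ (n - 1) • P.pair a b ≠ 0 := by
      rw [hpairab, ← hconjτ]
      intro h
      exact hkey (hconjinj _ h)
    have hab_n : τ ^ n • P.pair a b = 0 := by
      rw [← P.smul_left, hτna, P.zero_left]
    have hnpair : nuOf τ (P.pair a b) = n := by
      have h1 : nuOf τ (P.pair a b) ≤ n := nuOf_le hab_n
      have h2 : ¬ nuOf τ (P.pair a b) ≤ n - 1 := by
        intro h
        exact hab_n1 (smul_eq_zero_of_nuOf_le ⟨n, hab_n⟩ h)
      omega
    have hnb : nuOf τ b = n := by
      have h1 : nuOf τ b ≤ n := nuOf_le hbτ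
      have h2 : τ ^ (nuOf τ b) • b = 0 := smul_nuOf_eq_zero (htorA b)
      have h3 : τ ^ (nuOf τ b) • P.pair a b = 0 := by
        rw [← hστ, ← P.smul_right, h2, hpair_zero_right]
      have h4 : nuOf τ (P.pair a b) ≤ nuOf τ b := nuOf_le h3
      omega
    have := ha b hnb
    omega
  -- conclude
  obtain ⟨cc, hcc⟩ := hmem
  refine ⟨-cc, ?_, ?_⟩
  · by_contra hle
    push_neg at hle
    have h0 : τ ^ n • (-cc) = 0 := smul_eq_zero_of_nuOf_le (htorA _) hle
    rw [smul_neg, ← hcc] at h0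
    exact hτn1a (by rwa [neg_eq_zero] at h0)
  · have h0 : τ ^ (n - 1) • (a + τ • (-cc)) = 0 := by
      rw [smul_add, hcc, smul_smul, ← pow_succ]
      have h1 : n - 1 + 1 = n := by omega
      rw [h1, smul_neg, add_neg_cancel]
    have := nuOf_le h0
    omega
end
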